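/- Let ℓ ≥ 1 and 0 ≤ m ≤ ℓ. Then W(ℓ−m, m) = { μ^b[1] : μ ∈ F_1^m(Λ_ℓ) }, i.e. the set of (ℓ−m, m)-balanced partitions coincides with the set of second components of the 3-bar quotients of the strict partitions in F_1^m(Λ_ℓ). -/

import Mathlib

open scoped BigOperators

/-- A partition, represented canonically as the multiset of its (positive) parts. -/
structure Ptn where
  parts : Multiset ℕ
  pos : ∀ x ∈ parts, 0 < x

namespace Ptn

/-- Build a partition from an arbitrary multiset of naturals by discarding zero parts. -/
def of (s : Multiset ℕ) : Ptn :=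
  ⟨s.filter (fun x => 0 < x), fun _ hx => (Multiset.mem_filter.mp hx).2⟩

/-- The empty partition. -/
def empty : Ptn := ⟨0, by simp⟩

/-- The `i`-th largest part (`0`-indexed); `0` if `i` is at least the number of parts. -/
def part (l : Ptn) (i : ℕ) : ℕ :=
  ((l.parts.sort (· ≤ ·)).reverse).getD i 0

/-- The number of (positive) parts. -/
def length (l : Ptn) : ℕ := Multiset.card l.parts

/-- The size `|λ|`, i.e. the number being partitioned. -/
def size (l : Ptn) : ℕ := l.parts.sum

/-- A partition is strict if all its parts are distinct. -/
def Strict (l : Ptn) : Prop := l.parts.Nodup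

/-- The conjugate partition. -/
def conj (l : Ptn) : Ptn :=
  of ((Multiset.range (l.part 0)).map
    (fun j => Multiset.card (l.parts.filter (fun x => j < x))))

end Ptn

/-- The rectangular partition `□(n,m)` with `n` rows of length `m`. -/
def rect (n m : ℕ) : Ptn := Ptn.of (Multiset.replicate n m)

/-- The partition obtained by multiplying every part by `r`. -/
def scaleP (r : ℕ) (l : Ptn) : Ptn := Ptn.of (l.parts.map (fun a => r * a))

/-- Diagram containment: every part of `small` is at most the corresponding part of `big`. -/
def Contains (big small : Ptn) : Prop := ∀ i, small.part i ≤ big.part i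

/-- The beta-set (first-column hook lengths) `{λ_i + m - 1 - i : i < m}` of `l`,
computed with `m` beads (`m` at least the number of parts). -/
def betaSet (l : Ptn) (m : ℕ) : Finset ℕ :=
  (Finset.range m).image (fun i => l.part i + (m - 1 - i))

/-- The partition encoded by a finite set of bead positions: each bead contributes a part
equal to the number of empty positions (holes) below it. -/
def ptnOfBeads (B : Finset ℕ) : Ptn :=
  Ptn.of (B.val.map (fun p => p - (B.filter (fun q => q < p)).card))

/-- Levels of the beads on runner `k` of the `r`-abacus of `l`,
drawn with `r * l.length` beads (a multiple of `r`). -/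
def runnerLevels (r : ℕ) (l : Ptn) (k : ℕ) : Finset ℕ :=
  (Finset.range (l.part 0 + r * l.length + 1)).filter
    (fun s => r * s + k ∈ betaSet l (r * l.length))

/-- The `k`-th component `λ[k]` of the `r`-quotient of `l`. -/
def quotP (r : ℕ) (l : Ptn) (k : ℕ) : Ptn := ptnOfBeads (runnerLevels r l k)

/-- The `r`-core of `l`: push all beads of the `r`-abacus down as far as possible. -/
def coreP (r : ℕ) (l : Ptn) : Ptn :=
  ptnOfBeads ((Finset.range r).biUnion
    (fun k => (Finset.range (runnerLevels r l k).card).image (fun s => r * s + k)))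

/-- The key of the bead at position `p` for the `r`-numbering of the beads `B`:
a bead which is the `j`-th lowest bead on runner `k` gets key `r * j + k`. -/
def rKey (r : ℕ) (B : Finset ℕ) (p : ℕ) : ℕ :=
  r * (B.filter (fun q => q % r = p % r ∧ q < p)).card + p % r

/-- The number of inversions between the natural (increasing-position) numbering of the
beads `B` and the numbering by increasing `key`. -/
def inversions (key : ℕ → ℕ) (B : Finset ℕ) : ℕ :=
  ((B ×ˢ B).filter (fun pq => pq.1 < pq.2 ∧ key pq.2 < key pq.1)).card

/-- Exponent of the `r`-sign `δ_r`. -/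
def rSignExp (r : ℕ) (l : Ptn) : ℕ :=
  inversions (rKey r (betaSet l (r * l.length))) (betaSet l (r * l.length))

/-- The `r`-sign `δ_r(λ) ∈ {±1}`. -/
def rSign (r : ℕ) (l : Ptn) : ℤ := (-1) ^ rSignExp r l

/-- The key of the bead at position `p` for the `3`-bar numbering of the beads `B` of the
`3`-bar abacus: first the beads of runner `0` in increasing order, then the pairs of beads
on runners `2` and `1` paired off by increasing level (runner-`2` bead before
runner-`1` bead), then the remaining unpaired beads in increasing order. -/
def barKey (B : Finset ℕ) (p : ℕ) : ℕ :=
  let n0 := (B.filter (fun q => q % 3 = 0)).card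
  let t := min ((B.filter (fun q => q % 3 = 1)).card)
              ((B.filter (fun q => q % 3 = 2)).card)
  let rk := (B.filter (fun q => q % 3 = p % 3 ∧ q < p)).card
  if p % 3 = 0 then rk
  else if rk < t then (if p % 3 = 2 then n0 + 2 * rk else n0 + 2 * rk + 1)
  else n0 + 2 * t + (rk - t)

/-- Exponent of the `3`-bar sign `δ̄_3`.  The beads of the `3`-bar abacus of a strict
partition sit at the positions given by the parts. -/
def barSignExp (l : Ptn) : ℕ :=
  inversions (barKey l.parts.toFinset) l.parts.toFinset

/-- The `3`-bar sign `δ̄_3(λ) ∈ {±1}` of a strict partition. -/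
def barSign3 (l : Ptn) : ℤ := (-1) ^ barSignExp l

/-- The double `D(λ) = (λ_1,…,λ_l | λ_1 - 1,…,λ_l - 1)` (Frobenius notation)
of a strict partition `λ`, constructed row by row. -/
noncomputable def double (l : Ptn) : Ptn :=
  Ptn.of ((Multiset.range (l.length + l.part 0)).map (fun i =>
    (if i < l.length then l.part i + 1 else 0) +
      ((Finset.range (min i l.length)).filter (fun j => i + 1 ≤ j + l.part j)).card))

/-- The second component `λ^b[1] = D(λ)[1]` of the `3`-bar quotient of a strict
partition `λ`. -/
noncomputable def barQuot1 (l : Ptn) : Ptn := quotP 3 (double l) 1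

/-- The staircase-like strict partition `Λ_ℓ = (3ℓ-2, 3ℓ-5, …, 7, 4, 1)`. -/
def LamP (ℓ : ℕ) : Ptn := Ptn.of ((Multiset.range ℓ).map (fun i => 3 * i + 1))

/-- The staircase partition `Δ_ℓ = (ℓ, ℓ-1, …, 1)`. -/
def DelP (ℓ : ℕ) : Ptn := Ptn.of (Multiset.range (ℓ + 1))

/-- `F_1^m(Λ_ℓ)`: strict partitions obtained from `Λ_ℓ` by adding `m` cells, each
labelled `1`, where the cell in (0-indexed) column `j` is labelled `1` iff `j % 3 = 1`
(each row reads `0,1,0,0,1,0,…`). -/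
def F1Lam (ℓ m : ℕ) : Set Ptn :=
  {mu | mu.Strict ∧ Contains mu (LamP ℓ) ∧ mu.size = (LamP ℓ).size + m ∧
    ∀ i j, (LamP ℓ).part i ≤ j → j < mu.part i → j % 3 = 1}

/-- `F_1^m(Δ_ℓ)`: partitions obtained from `Δ_ℓ` by adding `m` cells, each labelled `1`,
where the cell `(i,j)` is labelled `1` iff `i + j` is odd. -/
def F1Del (ℓ m : ℕ) : Set Ptn :=
  {mu | Contains mu (DelP ℓ) ∧ mu.size = (DelP ℓ).size + m ∧
    ∀ i j, (DelP ℓ).part i ≤ j → j < mu.part i → (i + j) % 2 = 1}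

/-- `(α, β)` is complementary relative to the rectangle `□(n,m)`:
`α ⊆ □(n,m)` and `β_i = m - α_{n+1-i}` for `1 ≤ i ≤ n` (0-indexed below). -/
def Complementary (n m : ℕ) (a b : Ptn) : Prop :=
  a.length ≤ n ∧ a.part 0 ≤ m ∧ b.length ≤ n ∧
    ∀ i < n, b.part i = m - a.part (n - 1 - i)

/-- `W(n,m)`: the set of `(n,m)`-balanced partitions, i.e. partitions of `2nm` with at
most `2n` parts satisfying `μ_i + μ_{2n+1-i} = 2m` for `1 ≤ i ≤ n` (0-indexed below). -/
def W (n m : ℕ) : Set Ptn :=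
  {mu | mu.size = 2 * n * m ∧ mu.length ≤ 2 * n ∧
    ∀ i < n, mu.part i + mu.part (2 * n - 1 - i) = 2 * m}

/-! ### The ring of symmetric functions

We realise the ring of symmetric functions (with rational coefficients) as the
polynomial ring `ℚ[p_1, p_2, …]` in the power sums: the variable `X n` of
`MvPolynomial ℕ ℚ` stands for the power sum `p_{n+1}`. -/

abbrev SymF := MvPolynomial ℕ ℚ

open MvPolynomial

/-- `z_ρ = ∏ a^{m_a} m_a!` for a partition given as a multiset `ρ`. -/
def zval (s : Multiset ℕ) : ℚ :=
  s.toFinset.prod (fun a => (a : ℚ) ^ s.count a * (Nat.factorial (s.count a) : ℚ))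

/-- The power sum product `p_ρ` of a multiset `ρ`. -/
noncomputable def pMult (s : Multiset ℕ) : SymF :=
  (s.map (fun a => (X (a - 1) : SymF))).prod

/-- The complete homogeneous symmetric function `h_n = Σ_{ρ ⊢ n} z_ρ⁻¹ p_ρ`. -/
noncomputable def hSym (n : ℕ) : SymF :=
  ∑ ρ : Nat.Partition n, (zval ρ.parts)⁻¹ • pMult ρ.parts

/-- `h_k` for an integer index, vanishing for negative `k`. -/
noncomputable def hz (k : ℤ) : SymF := if k < 0 then 0 else hSym k.toNat

/-- The Schur function `S_λ`, via the Jacobi–Trudi formula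
`S_λ = det(h_{λ_i - i + j})`. -/
noncomputable def schur (l : Ptn) : SymF :=
  Matrix.det (Matrix.of (fun i j : Fin l.length =>
    hz ((l.part i.val : ℤ) + (j.val : ℤ) - (i.val : ℤ))))

/-- The plethysm `p_r ∘ f`: the algebra endomorphism sending each power sum `p_k`
to `p_{rk}`, i.e. substituting `x_i^r` for each variable `x_i`. -/
noncomputable def pleth (r : ℕ) (f : SymF) : SymF :=
  MvPolynomial.aeval (fun n => (X (r * (n + 1) - 1) : SymF)) f

/-- The `z`-weight of a power-sum monomial (exponent vector `d`). -/
def zfac (d : ℕ →₀ ℕ) : ℚ :=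
  d.prod (fun i e => ((i : ℚ) + 1) ^ e * (Nat.factorial e : ℚ))

/-- The Hall inner product, for which `⟨p_ρ, p_σ⟩ = δ_{ρσ} z_ρ` and the Schur
functions are orthonormal. -/
noncomputable def hall (f g : SymF) : ℚ :=
  f.support.sum (fun d => f.coeff d * g.coeff d * zfac d)

/-- The multi-Littlewood–Richardson coefficient `LR^λ_{μ^0,…,μ^{r-1}}`:
the multiplicity of `S_λ` in `S_{μ^0} ⋯ S_{μ^{r-1}}`. -/
noncomputable def LRmulti (lam : Ptn) (r : ℕ) (q : ℕ → Ptn) : ℚ :=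
  hall ((Finset.range r).prod (fun k => schur (q k))) (schur lam)

/-- The Littlewood–Richardson coefficient `LR^λ_{α,β}`:
the multiplicity of `S_λ` in `S_α · S_β`. -/
noncomputable def LR2 (lam a b : Ptn) : ℚ := hall (schur a * schur b) (schur lam)

/-- The irreducible symmetric group character `χ^μ(ρ)`, via the Frobenius formula
`χ^μ_ρ = ⟨S_μ, p_ρ⟩`. -/
noncomputable def chi (mu rho : Ptn) : ℚ := hall (schur mu) (pMult rho.parts)

/-- Symmetric functions in two alphabets `u`, `v`: `X (inl n)` is `p_{n+1}(u)` and
`X (inr n)` is `p_{n+1}(v)`. -/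
abbrev SymF2 := MvPolynomial (ℕ ⊕ ℕ) ℚ

/-- `f ↦ f(u)`. -/
noncomputable def toU : SymF →ₐ[ℚ] SymF2 :=
  aeval (fun n => (X (Sum.inl n) : SymF2))

/-- `f ↦ f(v)`. -/
noncomputable def toV : SymF →ₐ[ℚ] SymF2 :=
  aeval (fun n => (X (Sum.inr n) : SymF2))

/-- `f ↦ f(u - v)`, the difference of alphabets: `p_k ↦ p_k(u) - p_k(v)`. -/
noncomputable def toUV : SymF →ₐ[ℚ] SymF2 :=
  aeval (fun n => (X (Sum.inl n) : SymF2) - X (Sum.inr n))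

/-!
Both sides are parametrised by the `m`-subsets `J ⊆ {0, …, ℓ-1}`.

A partition in `F_1^m(Λ_ℓ)` is `Λ_ℓ` with one cell added at the end of the row `3k+1` for
each `k ∈ J`. A partition in `W(n,m)` is `{m + a, m - a : a ∈ A}` for a multiset `A` of `n`
numbers at most `m`; such multisets are lattice paths in an `n × m` box, i.e. of the form
`{#{j ∈ J | j < i} : i < n + m, i ∉ J}`.

For a strict partition `λ` and `M ≥ λ_1`, the `M`-bead beta-set of `D(λ)` is `{0, …, M-1}`
with holes at `M - λ_k` and extra beads at `M + λ_k`. Take `λ = Λ_ℓ + J` and `M = 3λ_1`: on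
runner `1` the parts `3k+2` (`k ∈ J`) leave holes and the parts `3k+1` (`k ∉ J`) add beads.
Counting the holes below each bead of runner `1` gives the parts `m + #{j ∈ J | j < i}` and
`#{j ∈ J | j > i}` for `i ∉ J`.
-/

open Finset

theorem List.map_range_getD {α : Type*} (L : List α) (d : α) :
    (List.range L.length).map (L.getD · d) = L := by
  apply List.ext_getElem (by simp)
  intro i h1 h2
  simp [List.getD_eq_getElem?_getD, List.getElem?_eq_getElem h2]

theorem List.getD_filter_pos {L : List ℕ} (hL : L.Pairwise (· ≥ ·)) (i : ℕ) :
    (L.filter (0 < ·)).getD i 0 = L.getD i 0 := by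
  induction L generalizing i with
  | nil => rfl
  | cons a t ih =>
    obtain ⟨ha, ht⟩ := List.pairwise_cons.mp hL
    rcases Nat.eq_zero_or_pos a with rfl | hpos
    · have hz : ∀ x ∈ t, x = 0 := fun x hx => Nat.le_zero.mp (ha x hx)
      rw [List.filter_eq_nil_iff.mpr fun x hx => by
        simp [(List.mem_cons.mp hx).elim id (hz x)]]
      cases i with
      | zero => rfl
      | succ i =>
        rw [List.getD_nil, List.getD_cons_succ, List.getD_eq_getElem?_getD]
        rcases h : t[i]? with _ | x
        · rfl
        · exact (hz x (List.mem_of_getElem? h)).symm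
    · rw [List.filter_cons_of_pos (by simpa using hpos)]
      cases i with
      | zero => rfl
      | succ i => exact ih ht i

theorem Multiset.map_range_reflect {α : Type*} (K : ℕ) (f : ℕ → α) :
    (Multiset.range K).map (fun i => f (K - 1 - i)) = (Multiset.range K).map f := by
  have h : (Multiset.range K).map (fun i => K - 1 - i) = Multiset.range K := by
    refine (Multiset.Nodup.ext ?_ (Multiset.nodup_range K)).mpr fun x => ?_
    · exact (Multiset.nodup_range K).map_on fun x hx y hy h => by
        simp only [Multiset.mem_range] at hx hy; omega
    · simp only [Multiset.mem_map, Multiset.mem_range]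
      exact ⟨fun ⟨y, hy, h⟩ => by omega, fun hx => ⟨K - 1 - x, by omega, by omega⟩⟩
  conv_rhs => rw [← h, Multiset.map_map]
  rfl

theorem Multiset.exists_antitoneOn_eq_map_range (A : Multiset ℕ) :
    ∃ a : ℕ → ℕ, AntitoneOn a (Set.Iio (Multiset.card A)) ∧
      A = (Multiset.range (Multiset.card A)).map a := by
  set L := A.sort (· ≥ ·)
  have hL : L.length = Multiset.card A := Multiset.length_sort _
  have hsorted : L.Pairwise (· ≥ ·) := Multiset.pairwise_sort A _
  refine ⟨(L.getD · 0), fun r hr s hs hrs => ?_, ?_⟩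
  · simp only [Set.mem_Iio, ← hL] at hr hs
    show L.getD s 0 ≤ L.getD r 0
    rw [List.getD_eq_getElem _ _ hr, List.getD_eq_getElem _ _ hs]
    rcases hrs.lt_or_eq with hlt | rfl
    · exact List.pairwise_iff_getElem.mp hsorted _ _ _ _ hlt
    · exact le_rfl
  · have hA : (L : Multiset ℕ) = A := Multiset.sort_eq A _
    conv_lhs => rw [← hA, ← L.map_range_getD 0]
    rw [hL]
    rfl

theorem Finset.val_union_of_disjoint {α : Type*} [DecidableEq α] {s t : Finset α}
    (h : Disjoint s t) : (s ∪ t).val = s.val + t.val := by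
  rw [← disjUnion_eq_union _ _ h]
  rfl

namespace Ptn

theorem ext {a b : Ptn} (h : a.parts = b.parts) : a = b := by
  cases a; cases b; simpa using h

theorem parts_of (s : Multiset ℕ) : (of s).parts = s.filter (0 < ·) := rfl

theorem size_of (s : Multiset ℕ) : (of s).size = s.sum := by
  conv_rhs => rw [← Multiset.filter_add_not (0 < ·) s]
  rw [Multiset.sum_add, Multiset.sum_eq_zero (s := s.filter (¬0 < ·)) (fun x hx => by
    simpa using (Multiset.mem_filter.mp hx).2), add_zero, size, parts_of]

theorem length_of_le (s : Multiset ℕ) : (of s).length ≤ Multiset.card s :=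
  Multiset.card_le_card (Multiset.filter_le _ s)

theorem of_add_eq_of_forall_eq_zero {s t : Multiset ℕ} (ht : ∀ x ∈ t, x = 0) :
    of (s + t) = of s := by
  apply ext
  rw [parts_of, parts_of, Multiset.filter_add, (Multiset.filter_eq_nil (s := t)).mpr
    fun x hx => by simp [ht x hx], add_zero]

def descList (l : Ptn) : List ℕ := (l.parts.sort (· ≤ ·)).reverse

theorem part_eq_getD (l : Ptn) (i : ℕ) : l.part i = l.descList.getD i 0 := rfl

theorem coe_descList (l : Ptn) : (l.descList : Multiset ℕ) = l.parts := by
  simp [descList, Multiset.sort_eq]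

theorem length_descList (l : Ptn) : l.descList.length = l.length := by
  simpa [length] using congrArg Multiset.card l.coe_descList

theorem pairwise_descList (l : Ptn) : l.descList.Pairwise (· ≥ ·) := by
  simpa [descList] using List.pairwise_reverse.mpr (Multiset.pairwise_sort l.parts (· ≤ ·))

theorem part_pos_iff (l : Ptn) {i : ℕ} : 0 < l.part i ↔ i < l.length := by
  rw [part_eq_getD, ← length_descList]
  constructor
  · intro h
    by_contra hi
    rw [List.getD_eq_default _ _ (not_lt.mp hi)] at h
    exact h.false
  · intro hi
    rw [List.getD_eq_getElem _ _ hi]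
    exact l.pos _ (l.coe_descList ▸ Multiset.mem_coe.mpr (List.getElem_mem hi))

theorem part_eq_zero (l : Ptn) {i : ℕ} (hi : l.length ≤ i) : l.part i = 0 :=
  Nat.eq_zero_of_not_pos fun h => absurd ((part_pos_iff l).mp h) (not_lt.mpr hi)

theorem length_eq_of_part_pos_iff {l : Ptn} {n : ℕ} (h : ∀ i, 0 < l.part i ↔ i < n) :
    l.length = n :=
  le_antisymm (not_lt.mp fun hn => lt_irrefl n (((h n).mp ((part_pos_iff l).mpr hn))))
    (not_lt.mp fun hn => lt_irrefl _ ((part_pos_iff l).mp ((h _).mpr hn)))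

theorem part_antitone (l : Ptn) : Antitone l.part := by
  intro i j hij
  rcases lt_or_ge j l.length with hj | hj
  · rw [part_eq_getD, part_eq_getD, ← length_descList] at *
    rw [List.getD_eq_getElem _ _ hj, List.getD_eq_getElem _ _ (lt_of_le_of_lt hij hj)]
    rcases hij.lt_or_eq with hlt | rfl
    · exact List.pairwise_iff_getElem.mp l.pairwise_descList _ _ _ _ hlt
    · exact le_rfl
  · simp [part_eq_zero l hj]

theorem parts_eq_map_range (l : Ptn) : l.parts = (Multiset.range l.length).map l.part := by
  rw [← coe_descList, ← length_descList]
  conv_lhs => rw [← l.descList.map_range_getD 0]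
  rfl

theorem mem_parts_iff (l : Ptn) {x : ℕ} : x ∈ l.parts ↔ ∃ i < l.length, l.part i = x := by
  simp [parts_eq_map_range l]

theorem ext_part {a b : Ptn} (h : ∀ i, a.part i = b.part i) : a = b := by
  have hlen : a.length = b.length :=
    length_eq_of_part_pos_iff fun i => by rw [h, part_pos_iff]
  apply ext
  rw [parts_eq_map_range a, parts_eq_map_range b, hlen, funext h]

theorem part_of_coe_list {L : List ℕ} (hL : L.Pairwise (· ≥ ·)) (i : ℕ) :
    (of L).part i = L.getD i 0 := by
  have hsort : (of L).descList = L.filter (0 < ·) := by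
    apply List.Perm.eq_of_pairwise' (r := (· ≥ ·)) (pairwise_descList _) (hL.filter _)
    rw [← Multiset.coe_eq_coe, coe_descList, parts_of, Multiset.filter_coe]
  rw [part_eq_getD, hsort, L.getD_filter_pos hL]

theorem part_of_map_range {K : ℕ} {f : ℕ → ℕ} (hf : AntitoneOn f (Set.Iio K)) (i : ℕ) :
    (of ((Multiset.range K).map f)).part i = if i < K then f i else 0 := by
  have hL : ((List.range K).map f).Pairwise (· ≥ ·) := by
    rw [List.pairwise_map, List.pairwise_iff_getElem]
    intro a b ha hb hab
    simp only [List.length_range] at ha hb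
    simp only [List.getElem_range]
    exact hf (Set.mem_Iio.mpr ha) (Set.mem_Iio.mpr hb) hab.le
  have h := part_of_coe_list hL i
  rw [← Multiset.map_coe] at h
  rw [← Multiset.coe_range, h]
  split_ifs with hi
  · simp [List.getD_eq_getElem?_getD, hi]
  · simp [List.getD_eq_getElem?_getD, hi]

theorem part_lt_part {l : Ptn} (hl : l.Strict) {i j : ℕ} (hij : i < j) (hj : j < l.length) :
    l.part j < l.part i := by
  have hnd : l.descList.Nodup := by
    rw [← Multiset.coe_nodup, coe_descList]; exact hl
  have hlt : l.descList.Pairwise (· > ·) :=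
    (l.pairwise_descList.and hnd).imp fun h => lt_of_le_of_ne h.1 (Ne.symm h.2)
  rw [part_eq_getD, part_eq_getD, ← length_descList] at *
  rw [List.getD_eq_getElem _ _ hj, List.getD_eq_getElem _ _ (hij.trans hj)]
  exact List.pairwise_iff_getElem.mp hlt _ _ _ _ hij

theorem part_add_sub_le {l : Ptn} (hl : l.Strict) {i j : ℕ} (hij : i ≤ j)
    (hj : j < l.length) : l.part j + (j - i) ≤ l.part i := by
  induction j, hij using Nat.le_induction with
  | base => simp
  | succ j hij ih =>
    have := part_lt_part hl (Nat.lt_add_one j) hj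
    have := ih (by omega)
    omega

theorem length_le_part_zero {l : Ptn} (hl : l.Strict) : l.length ≤ l.part 0 := by
  rcases Nat.eq_zero_or_pos l.length with h | h
  · omega
  · have := part_add_sub_le hl (Nat.zero_le _) (Nat.sub_lt h one_pos)
    have := (part_pos_iff l).mpr (Nat.sub_lt h one_pos)
    omega

theorem add_part_le_add_part {l : Ptn} (hl : l.Strict) {i j : ℕ} (hij : i ≤ j)
    (hj : j < l.length) : j + l.part j ≤ i + l.part i := by
  have := part_add_sub_le hl hij hj
  omega

end Ptn

def doubleRow (l : Ptn) (i : ℕ) : ℕ :=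
  (if i < l.length then l.part i + 1 else 0) +
    ((Finset.range (min i l.length)).filter (fun j => i + 1 ≤ j + l.part j)).card

theorem double_eq (l : Ptn) :
    double l = Ptn.of ((Multiset.range (l.length + l.part 0)).map (doubleRow l)) := rfl

section double

variable {l : Ptn}

theorem doubleRow_of_lt (hl : l.Strict) {i : ℕ} (hi : i < l.length) :
    doubleRow l i = l.part i + 1 + i := by
  rw [doubleRow, if_pos hi, min_eq_left hi.le, filter_true_of_mem, card_range]
  intro j hj
  have := Ptn.part_add_sub_le hl (mem_range.mp hj).le hi
  have := (Ptn.part_pos_iff l).mpr hi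
  omega

theorem doubleRow_of_ge {i : ℕ} (hi : l.length ≤ i) :
    doubleRow l i = #((range l.length).filter fun j => i < j + l.part j) := by
  rw [doubleRow, if_neg (not_lt.mpr hi), min_eq_right hi, zero_add]
  rfl

theorem doubleRow_le_length {i : ℕ} (hi : l.length ≤ i) : doubleRow l i ≤ l.length := by
  rw [doubleRow_of_ge hi]
  exact (card_filter_le _ _).trans (card_range _).le

theorem doubleRow_antitone (hl : l.Strict) : Antitone (doubleRow l) := by
  refine antitone_nat_of_succ_le fun i => ?_
  rcases lt_trichotomy (i + 1) l.length with hi | hi | hi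
  · rw [doubleRow_of_lt hl hi, doubleRow_of_lt hl (by omega)]
    have := Ptn.part_lt_part hl (Nat.lt_add_one i) hi
    omega
  · rw [doubleRow_of_lt hl (i := i) (by omega)]
    have := doubleRow_le_length (l := l) hi.ge
    omega
  · rw [doubleRow_of_ge (by omega), doubleRow_of_ge (by omega)]
    exact card_le_card (monotone_filter_right _ fun j hj => by omega)

theorem doubleRow_pos_iff (hl : l.Strict) {i : ℕ} : 0 < doubleRow l i ↔ i < l.part 0 := by
  have hlen := Ptn.length_le_part_zero hl
  rcases lt_or_ge i l.length with hi | hi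
  · rw [doubleRow_of_lt hl hi]
    omega
  · rw [doubleRow_of_ge hi, card_pos]
    constructor
    · rintro ⟨j, hj⟩
      rw [mem_filter, mem_range] at hj
      have := Ptn.add_part_le_add_part hl (Nat.zero_le j) hj.1
      omega
    · intro h
      have := (Ptn.part_pos_iff l).mp (by omega : 0 < l.part 0)
      exact ⟨0, mem_filter.mpr ⟨mem_range.mpr this, by omega⟩⟩

theorem part_double (hl : l.Strict) (i : ℕ) : (double l).part i = doubleRow l i := by
  rw [double_eq, Ptn.part_of_map_range ((doubleRow_antitone hl).antitoneOn _)]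
  split_ifs with hi
  · rfl
  · exact (Nat.eq_zero_of_not_pos fun h => hi (by have := (doubleRow_pos_iff hl).mp h; omega)).symm

theorem length_double (hl : l.Strict) : (double l).length = l.part 0 :=
  Ptn.length_eq_of_part_pos_iff fun i => by rw [part_double hl, doubleRow_pos_iff hl]

/-- The beads of the rows of `D(λ)` below the `l`-th avoid the holes `M - λ_k` of
`betaSet_double`. -/
theorem doubleRow_add_part_ne (hl : l.Strict) {i k : ℕ} (hi : l.length ≤ i)
    (hk : k < l.length) : doubleRow l i + l.part k ≠ i + 1 := by
  rw [doubleRow_of_ge hi]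
  set S := (range l.length).filter fun j => i < j + l.part j
  rcases lt_or_ge i (k + l.part k) with hik | hik
  · have hsub : range (k + 1) ⊆ S := fun j hj => by
      rw [mem_range] at hj
      have := Ptn.add_part_le_add_part hl (Nat.le_of_lt_succ hj) hk
      exact mem_filter.mpr ⟨mem_range.mpr (by omega), by omega⟩
    have := card_le_card hsub
    rw [card_range] at this
    omega
  · have hsub : S ⊆ range k := fun j hj => by
      rw [mem_filter, mem_range] at hj
      rw [mem_range]
      by_contra hjk
      have := Ptn.add_part_le_add_part hl (not_lt.mp hjk) hj.1
      omega
    have := card_le_card hsub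
    rw [card_range] at this
    omega

end double

theorem card_betaSet (l : Ptn) (M : ℕ) : #(betaSet l M) = M := by
  rw [betaSet, card_image_of_injOn, card_range]
  have hanti : StrictAntiOn (fun i => l.part i + (M - 1 - i)) (Set.Iio M) :=
    fun i _ j hj hij => by
      have := l.part_antitone hij.le
      simp only [Set.mem_Iio] at hj
      show l.part j + (M - 1 - j) < l.part i + (M - 1 - i)
      omega
  exact fun i hi j hj h => hanti.injOn (by simpa using hi) (by simpa using hj) h

theorem betaSet_double {l : Ptn} (hl : l.Strict) {M : ℕ} (hM : l.part 0 ≤ M) :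
    betaSet (double l) M =
      (range M \ l.parts.toFinset.image (M - ·)) ∪ l.parts.toFinset.image (M + ·) := by
  have hle : ∀ x ∈ l.parts, 0 < x ∧ x ≤ M := fun x hx => by
    obtain ⟨k, -, rfl⟩ := l.mem_parts_iff.mp hx
    exact ⟨l.pos _ hx, (l.part_antitone (Nat.zero_le k)).trans hM⟩
  have hcard : #l.parts.toFinset = l.length := Multiset.toFinset_card_of_nodup hl
  have hsub : l.parts.toFinset.image (M - ·) ⊆ range M := fun x hx => by
    obtain ⟨y, hy, rfl⟩ := mem_image.mp hx
    have := hle y (Multiset.mem_toFinset.mp hy)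
    exact mem_range.mpr (by omega)
  refine eq_of_subset_of_card_le (fun x hx => ?_) ?_
  · obtain ⟨i, hi, rfl⟩ := mem_image.mp hx
    rw [mem_range] at hi
    rw [part_double hl, mem_union, mem_sdiff, mem_range, mem_image, mem_image]
    rcases lt_or_ge i l.length with hil | hil
    · rw [doubleRow_of_lt hl hil]
      exact Or.inr ⟨l.part i, Multiset.mem_toFinset.mpr (l.mem_parts_iff.mpr ⟨i, hil, rfl⟩),
        by omega⟩
    · have := doubleRow_le_length hil
      refine Or.inl ⟨by omega, fun ⟨y, hy, hyx⟩ => ?_⟩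
      obtain ⟨k, hk, rfl⟩ := l.mem_parts_iff.mp (Multiset.mem_toFinset.mp hy)
      have := hle _ (Multiset.mem_toFinset.mp hy)
      exact doubleRow_add_part_ne hl hil hk (by omega)
  · rw [card_betaSet, card_union_of_disjoint, card_sdiff_of_subset hsub, card_range,
      card_image_of_injOn, card_image_of_injOn, hcard]
    · have := Ptn.length_le_part_zero hl
      omega
    · exact fun x _ y _ h => by simpa using h
    · exact fun x hx y hy h => by
        have := hle x (Multiset.mem_toFinset.mp hx)
        have := hle y (Multiset.mem_toFinset.mp hy)
        have h : M - x = M - y := h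
        omega
    · exact disjoint_left.mpr fun x hx hx' => by
        obtain ⟨y, hy, rfl⟩ := mem_image.mp hx'
        have := (mem_range.mp (mem_sdiff.mp hx).1)
        omega

theorem mem_runnerLevels {r : ℕ} (hr : 0 < r) (l : Ptn) (k s : ℕ) :
    s ∈ runnerLevels r l k ↔ r * s + k ∈ betaSet l (r * l.length) := by
  rw [runnerLevels, mem_filter, mem_range, and_iff_right_iff_imp]
  intro h
  obtain ⟨i, hi, hsi⟩ := mem_image.mp h
  have := l.part_antitone (Nat.zero_le i)
  have := Nat.le_mul_of_pos_left s hr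
  omega

theorem ptnOfBeads_eq (B : Finset ℕ) :
    ptnOfBeads B = Ptn.of (B.val.map fun p => #(range p \ B)) := by
  refine congrArg Ptn.of (Multiset.map_congr rfl fun p _ => ?_)
  have hsub : B.filter (· < p) ⊆ range p := fun x hx => mem_range.mpr (mem_filter.mp hx).2
  have hsdiff : range p \ B = range p \ B.filter (· < p) := by
    ext x
    simp only [mem_sdiff, mem_range, mem_filter]
    tauto
  rw [hsdiff, card_sdiff_of_subset hsub, card_range]

/-- `μ_i = m + a_i` and `μ_{2n+1-i} = m - a_i` for `A = {a_1 ≥ … ≥ a_n}`. -/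
def balancedOf (m : ℕ) (A : Multiset ℕ) : Ptn := Ptn.of (A.map (m + ·) + A.map (m - ·))

def balancedRow (n m : ℕ) (a : ℕ → ℕ) (r : ℕ) : ℕ :=
  if r < n then m + a r else m - a (2 * n - 1 - r)

section balanced

variable {n m : ℕ} {a : ℕ → ℕ}

theorem balancedRow_antitoneOn (ha : AntitoneOn a (Set.Iio n)) (ham : ∀ r < n, a r ≤ m) :
    AntitoneOn (balancedRow n m a) (Set.Iio (2 * n)) := by
  intro r hr s hs hrs
  simp only [Set.mem_Iio] at hr hs
  unfold balancedRow
  split_ifs with hs' hr' hr'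
  · exact Nat.add_le_add_left (ha (Set.mem_Iio.mpr hr') (Set.mem_Iio.mpr hs') hrs) m
  · omega
  · have := ham r hr'
    omega
  · have := ha (Set.mem_Iio.mpr (by omega : 2 * n - 1 - s < n))
      (Set.mem_Iio.mpr (by omega : 2 * n - 1 - r < n)) (by omega : 2 * n - 1 - s ≤ 2 * n - 1 - r)
    omega

theorem map_range_balancedRow :
    (Multiset.range (2 * n)).map (balancedRow n m a) =
      ((Multiset.range n).map a).map (m + ·) + ((Multiset.range n).map a).map (m - ·) := by
  rw [two_mul, Multiset.range_add, Multiset.map_add, Multiset.map_map, Multiset.map_map,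
    Multiset.map_map, ← Multiset.map_range_reflect n (((m - ·) ∘ a))]
  congr 1 <;> refine Multiset.map_congr rfl fun r hr => ?_ <;>
    simp only [Multiset.mem_range] at hr <;> simp only [Function.comp_apply, balancedRow]
  · rw [if_pos hr]
  · rw [if_neg (by omega)]
    congr 2
    omega

theorem balancedOf_part (ha : AntitoneOn a (Set.Iio n)) (ham : ∀ r < n, a r ≤ m) (r : ℕ) :
    (balancedOf m ((Multiset.range n).map a)).part r =
      if r < 2 * n then balancedRow n m a r else 0 := by
  rw [balancedOf, ← map_range_balancedRow]
  exact Ptn.part_of_map_range (balancedRow_antitoneOn ha ham) r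

theorem balancedOf_mem_W {A : Multiset ℕ} (hA : Multiset.card A = n) (hAm : ∀ x ∈ A, x ≤ m) :
    balancedOf m A ∈ W n m := by
  refine ⟨?_, ?_, fun r hr => ?_⟩
  · rw [balancedOf, Ptn.size_of, Multiset.sum_add, ← Multiset.sum_map_add,
      Multiset.map_congr rfl fun x hx => (by have := hAm x hx; omega : m + x + (m - x) = 2 * m),
      Multiset.map_const', Multiset.sum_replicate, hA, smul_eq_mul]
    ring
  · refine (Ptn.length_of_le _).trans ?_
    simp [hA, two_mul]
  · obtain ⟨a, ha, hAa⟩ := A.exists_antitoneOn_eq_map_range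
    rw [hA] at ha hAa
    rw [hAa] at hAm ⊢
    have ham : ∀ r < n, a r ≤ m := fun r hr =>
      hAm _ (Multiset.mem_map_of_mem _ (Multiset.mem_range.mpr hr))
    rw [balancedOf_part ha ham, balancedOf_part ha ham, if_pos (by omega), if_pos (by omega)]
    unfold balancedRow
    rw [if_pos hr, if_neg (by omega), Nat.sub_sub_self (by omega)]
    have := ham r hr
    omega

theorem exists_balancedOf_of_mem_W {μ : Ptn} (hμ : μ ∈ W n m) :
    ∃ A : Multiset ℕ, Multiset.card A = n ∧ (∀ x ∈ A, x ≤ m) ∧ balancedOf m A = μ := by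
  obtain ⟨-, hlen, hbal⟩ := hμ
  have hbounds : ∀ r < n, m ≤ μ.part r ∧ μ.part r ≤ 2 * m := fun r hr => by
    have hmid := hbal (n - 1) (by omega)
    rw [show 2 * n - 1 - (n - 1) = n by omega] at hmid
    have := μ.part_antitone (show r ≤ n - 1 by omega)
    have := μ.part_antitone (show n - 1 ≤ n by omega)
    have := hbal r hr
    omega
  obtain ⟨a, ha_def⟩ : ∃ a : ℕ → ℕ, ∀ r, a r = μ.part r - m := ⟨_, fun _ => rfl⟩
  have ha : AntitoneOn a (Set.Iio n) := fun r _ s _ hrs => by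
    simpa only [ha_def] using Nat.sub_le_sub_right (μ.part_antitone hrs) m
  have ham : ∀ r < n, a r ≤ m := fun r hr => by have := hbounds r hr; rw [ha_def]; omega
  refine ⟨(Multiset.range n).map a, by simp, by simpa using ham, Ptn.ext_part fun r => ?_⟩
  rw [balancedOf_part ha ham]
  unfold balancedRow
  simp only [ha_def]
  split_ifs with h2n hn
  · have := hbounds r hn
    omega
  · have := hbounds (2 * n - 1 - r) (by omega)
    have := hbal (2 * n - 1 - r) (by omega)
    rw [Nat.sub_sub_self (by omega)] at this
    omega
  · exact (μ.part_eq_zero (by omega)).symm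

theorem W_eq (n m : ℕ) :
    W n m = {μ | ∃ A : Multiset ℕ, Multiset.card A = n ∧ (∀ x ∈ A, x ≤ m) ∧ balancedOf m A = μ} :=
  Set.ext fun _ =>
    ⟨exists_balancedOf_of_mem_W, fun ⟨_, hA, hAm, hμ⟩ => hμ ▸ balancedOf_mem_W hA hAm⟩

end balanced

def countBelow (J : Finset ℕ) (i : ℕ) : ℕ := #(J.filter (· < i))

/-- Induction on the last step of the lattice path: it is horizontal at height `m`
(`n + m - 1 ∉ J`) if `m ∈ A`, and vertical (`n + m - 1 ∈ J`) otherwise. -/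
theorem exists_subset_map_countBelow_eq (n m : ℕ) (A : Multiset ℕ) (hA : Multiset.card A = n)
    (hAm : ∀ x ∈ A, x ≤ m) :
    ∃ J ⊆ range (n + m), #J = m ∧ (range (n + m) \ J).val.map (countBelow J) = A := by
  by_cases hmA : m ∈ A
  · obtain ⟨A', rfl⟩ := Multiset.exists_cons_of_mem hmA
    obtain ⟨J, hJ, hcard, hmap⟩ := exists_subset_map_countBelow_eq (Multiset.card A') m A' rfl
      fun x hx => hAm x (Multiset.mem_cons_of_mem hx)
    have hnJ : Multiset.card A' + m ∉ J := fun h => by simpa using hJ h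
    refine ⟨J, hJ.trans (range_subset_range.mpr (by simp at hA; omega)), hcard, ?_⟩
    rw [← hA, Multiset.card_cons, Nat.add_right_comm, range_add_one,
      insert_sdiff_of_notMem _ hnJ, insert_val_of_notMem (by simp), Multiset.map_cons, hmap,
      countBelow, filter_true_of_mem fun x hx => by simpa using hJ hx, hcard]
  · rcases Nat.eq_zero_or_pos m with rfl | hm
    · refine ⟨∅, empty_subset _, rfl, ?_⟩
      have : A = 0 := Multiset.eq_zero_of_forall_notMem fun x hx =>
        hmA (Nat.le_zero.mp (hAm x hx) ▸ hx)
      simp [this, ← hA]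
    · obtain ⟨J, hJ, hcard, hmap⟩ := exists_subset_map_countBelow_eq n (m - 1) A hA fun x hx =>
        Nat.le_sub_one_of_lt (lt_of_le_of_ne (hAm x hx) fun h => hmA (h ▸ hx))
      have hnJ : n + (m - 1) ∉ J := fun h => by simpa using hJ h
      have hrange : range (n + m) = insert (n + (m - 1)) (range (n + (m - 1))) := by
        rw [← range_add_one]; congr 1; omega
      refine ⟨insert (n + (m - 1)) J, ?_, by rw [card_insert_of_notMem hnJ, hcard]; omega, ?_⟩
      · rw [hrange]
        exact insert_subset_insert _ hJ
      · rw [hrange, insert_sdiff_insert, sdiff_insert_of_notMem (by simp), ← hmap]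
        refine Multiset.map_congr rfl fun i hi => ?_
        have hi : i < n + (m - 1) := by simpa using (mem_sdiff.mp hi).1
        simp only [countBelow, filter_insert, if_neg (show ¬ n + (m - 1) < i by omega)]
termination_by n + m

/-- Row `k` of `Λ_ℓ`, counted from the bottom, with one cell added when `k ∈ J`. -/
def lamRow (J : Finset ℕ) (k : ℕ) : ℕ := if k ∈ J then 3 * k + 2 else 3 * k + 1

def lamAdd (ℓ : ℕ) (J : Finset ℕ) : Ptn := Ptn.of ((Multiset.range ℓ).map (lamRow J))

section lamAdd

variable {ℓ : ℕ} {J : Finset ℕ}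

theorem lamRow_strictMono (J : Finset ℕ) : StrictMono (lamRow J) :=
  strictMono_nat_of_lt_succ fun k => by unfold lamRow; split_ifs <;> omega

theorem lamAdd_empty (ℓ : ℕ) : lamAdd ℓ ∅ = LamP ℓ := by
  rfl

theorem lamAdd_part (ℓ : ℕ) (J : Finset ℕ) (i : ℕ) :
    (lamAdd ℓ J).part i = if i < ℓ then lamRow J (ℓ - 1 - i) else 0 := by
  rw [lamAdd, ← Multiset.map_range_reflect]
  exact Ptn.part_of_map_range (fun a ha b hb hab =>
    (lamRow_strictMono J).monotone (by simp only [Set.mem_Iio] at ha hb; omega)) i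

theorem LamP_part (ℓ i : ℕ) : (LamP ℓ).part i = if i < ℓ then 3 * (ℓ - 1 - i) + 1 else 0 := by
  simp [← lamAdd_empty, lamAdd_part, lamRow]

theorem lamAdd_strict (ℓ : ℕ) (J : Finset ℕ) : (lamAdd ℓ J).Strict :=
  ((Multiset.nodup_range ℓ).map (lamRow_strictMono J).injective).filter _

theorem mem_lamAdd_parts {x : ℕ} : x ∈ (lamAdd ℓ J).parts ↔ ∃ k < ℓ, lamRow J k = x := by
  simp only [lamAdd, Ptn.parts_of, Multiset.mem_filter, Multiset.mem_map, Multiset.mem_range]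
  exact ⟨fun h => h.1, fun h => ⟨h, by obtain ⟨k, -, rfl⟩ := h; unfold lamRow; split_ifs <;> omega⟩⟩

theorem lamAdd_size (hJ : J ⊆ range ℓ) : (lamAdd ℓ J).size = (LamP ℓ).size + #J := by
  have hrow : ∀ k, lamRow J k = lamRow ∅ k + if k ∈ J then 1 else 0 := fun k => by
    simp only [lamRow]; split_ifs <;> simp_all
  rw [← lamAdd_empty, lamAdd, lamAdd, Ptn.size_of, Ptn.size_of, Multiset.map_congr rfl
    fun k _ => hrow k, Multiset.sum_map_add, ← Finset.range_val]
  simp only [← Finset.sum_eq_multiset_sum]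
  rw [Finset.sum_boole, Finset.filter_mem_eq_inter, Finset.inter_eq_right.mpr hJ, Nat.cast_id]

end lamAdd

theorem eq_lamAdd_of_mem_F1Lam {ℓ m : ℕ} {μ : Ptn} (hμ : μ ∈ F1Lam ℓ m) :
    μ = lamAdd ℓ ((range ℓ).filter fun k => μ.part (ℓ - 1 - k) = 3 * k + 2) := by
  obtain ⟨-, hcont, -, hlab⟩ := hμ
  refine Ptn.ext_part fun i => ?_
  rw [lamAdd_part]
  split_ifs with hi
  · have hlo := hcont i
    rw [LamP_part, if_pos hi] at hlo
    have hhi : μ.part i ≤ 3 * (ℓ - 1 - i) + 2 := by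
      by_contra h
      have := hlab i (3 * (ℓ - 1 - i) + 2) (by rw [LamP_part, if_pos hi]; omega) (by omega)
      omega
    have hk : ℓ - 1 - (ℓ - 1 - i) = i := by omega
    simp only [lamRow, Finset.mem_filter, Finset.mem_range, hk]
    split_ifs <;> omega
  · by_contra h
    have := hlab i 0 (by rw [LamP_part, if_neg hi]) (Nat.pos_of_ne_zero h)
    omega

theorem F1Lam_eq (ℓ m : ℕ) : F1Lam ℓ m = {μ | ∃ J ⊆ range ℓ, #J = m ∧ lamAdd ℓ J = μ} := by
  ext μ
  constructor
  · intro hμ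
    set J := (range ℓ).filter fun k => μ.part (ℓ - 1 - k) = 3 * k + 2
    have hμJ : μ = lamAdd ℓ J := eq_lamAdd_of_mem_F1Lam hμ
    have hJ : J ⊆ range ℓ := filter_subset _ _
    have hsize := hμ.2.2.1
    rw [hμJ, lamAdd_size hJ] at hsize
    exact ⟨J, hJ, by omega, hμJ.symm⟩
  · rintro ⟨J, hJ, rfl, rfl⟩
    refine ⟨lamAdd_strict ℓ J, fun i => ?_, lamAdd_size hJ, fun i j hlo hhi => ?_⟩
    · rw [LamP_part, lamAdd_part, lamRow]
      split_ifs <;> omega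
    · rw [LamP_part] at hlo
      rw [lamAdd_part, lamRow] at hhi
      split_ifs at hlo hhi <;> omega

theorem le_lamAdd_part_zero (ℓ : ℕ) (J : Finset ℕ) : ℓ ≤ (lamAdd ℓ J).part 0 := by
  rw [lamAdd_part, lamRow]
  split_ifs <;> omega

def runnerOneLevels (ℓ N : ℕ) (J : Finset ℕ) : Finset ℕ :=
  (range N \ J).image (N - 1 - ·) ∪ (range ℓ \ J).image (N + ·)

section runnerOne

variable {ℓ : ℕ} {J : Finset ℕ}

theorem lamRow_le_part_zero {k : ℕ} (hk : k < ℓ) : lamRow J k ≤ (lamAdd ℓ J).part 0 := by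
  have := (lamAdd ℓ J).part_antitone (Nat.zero_le (ℓ - 1 - k))
  rwa [lamAdd_part, if_pos (by omega), Nat.sub_sub_self (by omega)] at this

theorem runnerLevels_double_lamAdd (hJ : J ⊆ range ℓ) :
    runnerLevels 3 (double (lamAdd ℓ J)) 1 = runnerOneLevels ℓ ((lamAdd ℓ J).part 0) J := by
  have hl := lamAdd_strict ℓ J
  set N := (lamAdd ℓ J).part 0
  ext s
  rw [mem_runnerLevels (by norm_num), length_double hl, betaSet_double hl (by omega),
    runnerOneLevels]
  simp only [mem_union, mem_sdiff, mem_range, mem_image, Multiset.mem_toFinset, mem_lamAdd_parts]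
  constructor
  · rintro (⟨hs, hne⟩ | ⟨_, ⟨k, hk, rfl⟩, hks⟩)
    · refine Or.inl ⟨N - 1 - s, ⟨by omega, fun hJs => hne ⟨lamRow J (N - 1 - s), ?_, ?_⟩⟩, by omega⟩
      · exact ⟨N - 1 - s, mem_range.mp (hJ hJs), rfl⟩
      · have := lamRow_le_part_zero (J := J) (mem_range.mp (hJ hJs))
        simp only [lamRow, if_pos hJs] at this ⊢
        omega
    · have := lamRow_le_part_zero (J := J) hk
      unfold lamRow at hks
      split_ifs at hks with hkJ
      · omega
      · exact Or.inr ⟨k, ⟨hk, hkJ⟩, by omega⟩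
  · rintro (⟨t, ⟨ht, htJ⟩, rfl⟩ | ⟨i, ⟨hi, hiJ⟩, rfl⟩)
    · refine Or.inl ⟨by omega, fun ⟨_, ⟨k, hk, rfl⟩, hks⟩ => ?_⟩
      have := lamRow_le_part_zero (J := J) hk
      unfold lamRow at hks this
      split_ifs at hks this with hkJ
      · exact htJ (by convert hkJ using 1; omega)
      · omega
    · exact Or.inr ⟨_, ⟨i, hi, rfl⟩, by simp only [lamRow, if_neg hiJ]; omega⟩

end runnerOne

section beads

variable {ℓ N : ℕ} {J : Finset ℕ}

theorem card_range_sdiff_runnerOneLevels_low (hJN : J ⊆ range N) {t : ℕ} (ht : t < N) :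
    #(range (N - 1 - t) \ runnerOneLevels ℓ N J) = #(J.filter (t < ·)) := by
  have hJN' : ∀ j ∈ J, j < N := fun j hj => mem_range.mp (hJN hj)
  have : range (N - 1 - t) \ runnerOneLevels ℓ N J = (J.filter (t < ·)).image (N - 1 - ·) := by
    ext x
    simp only [runnerOneLevels, mem_sdiff, mem_union, mem_image, mem_range, mem_filter, not_or,
      not_exists, not_and]
    constructor
    · rintro ⟨hx, hlow, -⟩
      by_contra hJx
      exact hlow (N - 1 - x) ⟨by omega, fun h => hJx ⟨N - 1 - x, ⟨h, by omega⟩, by omega⟩⟩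
        (by omega)
    · rintro ⟨j, ⟨hj, htj⟩, rfl⟩
      have := hJN' j hj
      refine ⟨by omega, fun a ⟨_, haJ⟩ hax => haJ ?_, fun a _ hax => by omega⟩
      rwa [show a = j by omega]
  rw [this, card_image_of_injOn fun a ha b hb h => by
    have := hJN' a (mem_filter.mp ha).1
    have := hJN' b (mem_filter.mp hb).1
    have h : N - 1 - a = N - 1 - b := h
    omega]

theorem card_range_sdiff_runnerOneLevels_high (hJ : J ⊆ range ℓ) (hN : ℓ ≤ N) {i : ℕ}
    (hi : i ∈ range ℓ \ J) :
    #(range (N + i) \ runnerOneLevels ℓ N J) = #J + countBelow J i := by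
  have hJℓ : ∀ j ∈ J, j < ℓ := fun j hj => mem_range.mp (hJ hj)
  obtain ⟨hiℓ, hiJ⟩ := mem_sdiff.mp hi
  rw [mem_range] at hiℓ
  have : range (N + i) \ runnerOneLevels ℓ N J =
      J.image (N - 1 - ·) ∪ (J.filter (· < i)).image (N + ·) := by
    ext x
    simp only [runnerOneLevels, mem_sdiff, mem_union, mem_image, mem_range, mem_filter, not_or,
      not_exists, not_and]
    constructor
    · rintro ⟨hx, hlow, hhigh⟩
      rcases lt_or_ge x N with hxN | hxN
      · by_contra hJx
        exact hlow (N - 1 - x) ⟨by omega, fun h => hJx (Or.inl ⟨N - 1 - x, h, by omega⟩)⟩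
          (by omega)
      · by_contra hJx
        exact hhigh (x - N) ⟨by omega, fun h => hJx (Or.inr ⟨x - N, ⟨h, by omega⟩, by omega⟩)⟩
          (by omega)
    · rintro (⟨j, hj, rfl⟩ | ⟨j, ⟨hj, hji⟩, rfl⟩) <;> have := hJℓ j hj
      · refine ⟨by omega, fun a ⟨_, haJ⟩ hax => haJ ?_, fun a _ hax => by omega⟩
        rwa [show a = j by omega]
      · refine ⟨by omega, fun a _ hax => by omega, fun a ⟨_, haJ⟩ hax => haJ ?_⟩
        rwa [show a = j by omega]
  rw [this, card_union_of_disjoint, card_image_of_injOn, card_image_of_injOn, countBelow]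
  · exact fun a _ b _ h => by simpa using h
  · exact fun a ha b hb h => by
      have := hJℓ a ha
      have := hJℓ b hb
      have h : N - 1 - a = N - 1 - b := h
      omega
  · refine disjoint_left.mpr fun x hx hx' => ?_
    obtain ⟨a, ha, rfl⟩ := mem_image.mp hx
    obtain ⟨b, -, hb⟩ := mem_image.mp hx'
    have := hJℓ a ha
    omega

theorem card_filter_gt_eq_sub_countBelow {i : ℕ} (hi : i ∉ J) :
    #(J.filter (i < ·)) = #J - countBelow J i := by
  rw [countBelow, ← card_filter_add_card_filter_not (· < i) (s := J), Nat.add_sub_cancel_left]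
  congr 1
  exact filter_congr fun j hj => by
    have : j ≠ i := fun h => hi (h ▸ hj)
    omega

theorem ptnOfBeads_runnerOneLevels (hJ : J ⊆ range ℓ) (hN : ℓ ≤ N) :
    ptnOfBeads (runnerOneLevels ℓ N J) = balancedOf #J ((range ℓ \ J).val.map (countBelow J)) := by
  have hJN : J ⊆ range N := hJ.trans (range_subset_range.mpr hN)
  have hbeads : (runnerOneLevels ℓ N J).val =
      (range N \ J).val.map (N - 1 - ·) + (range ℓ \ J).val.map (N + ·) := by
    rw [runnerOneLevels, Finset.val_union_of_disjoint, image_val_of_injOn, image_val_of_injOn]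
    · exact fun a _ b _ h => by simpa using h
    · exact fun a ha b hb h => by
        have := mem_range.mp (mem_sdiff.mp ha).1
        have := mem_range.mp (mem_sdiff.mp hb).1
        have h : N - 1 - a = N - 1 - b := h
        omega
    · refine disjoint_left.mpr fun x hx hx' => ?_
      obtain ⟨a, ha, rfl⟩ := mem_image.mp hx
      obtain ⟨b, -, hb⟩ := mem_image.mp hx'
      have := mem_range.mp (mem_sdiff.mp ha).1
      omega
  have hsplit : (range N \ J).val = (range ℓ \ J).val + (Ico ℓ N).val := by
    rw [← Finset.val_union_of_disjoint]
    · congr 1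
      ext x
      simp only [mem_sdiff, mem_range, mem_union, mem_Ico]
      have := fun h : x ∈ J => mem_range.mp (hJ h)
      constructor
      · rintro ⟨hx, hxJ⟩
        by_cases hxℓ : x < ℓ
        exacts [Or.inl ⟨hxℓ, hxJ⟩, Or.inr ⟨by omega, hx⟩]
      · rintro (⟨hx, hxJ⟩ | ⟨hx, hxN⟩)
        exacts [⟨by omega, hxJ⟩, ⟨hxN, fun h => by have := this h; omega⟩]
    · exact disjoint_left.mpr fun x hx hx' => by
        have := mem_range.mp (mem_sdiff.mp hx).1
        have := (mem_Ico.mp hx').1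
        omega
  rw [ptnOfBeads_eq, hbeads, Multiset.map_add, Multiset.map_map, Multiset.map_map, hsplit,
    Multiset.map_add, add_right_comm, Ptn.of_add_eq_of_forall_eq_zero, add_comm, balancedOf,
    Multiset.map_map, Multiset.map_map]
  · congr 2 <;> refine Multiset.map_congr rfl fun i hi => ?_ <;> simp only [Function.comp_apply]
    · exact card_range_sdiff_runnerOneLevels_high hJ hN (mem_val.mp hi)
    · rw [card_range_sdiff_runnerOneLevels_low hJN
          ((mem_range.mp (mem_sdiff.mp hi).1).trans_le hN),
        card_filter_gt_eq_sub_countBelow (mem_sdiff.mp hi).2]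
  · intro x hx
    obtain ⟨t, ht, rfl⟩ := Multiset.mem_map.mp hx
    have ht := mem_Ico.mp (mem_val.mp ht)
    rw [Function.comp_apply, card_range_sdiff_runnerOneLevels_low hJN ht.2, card_eq_zero,
      filter_eq_empty_iff]
    exact fun j hj => by have := mem_range.mp (hJ hj); omega

end beads

theorem barQuot1_lamAdd {ℓ : ℕ} {J : Finset ℕ} (hJ : J ⊆ range ℓ) :
    barQuot1 (lamAdd ℓ J) = balancedOf #J ((range ℓ \ J).val.map (countBelow J)) := by
  rw [barQuot1, quotP, runnerLevels_double_lamAdd hJ,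
    ptnOfBeads_runnerOneLevels hJ (le_lamAdd_part_zero ℓ J)]

theorem stmt7_general (ℓ m : ℕ) (hm : m ≤ ℓ) :
    W (ℓ - m) m = barQuot1 '' (F1Lam ℓ m) := by
  rw [W_eq, F1Lam_eq]
  ext μ
  simp only [Set.mem_ofPred_eq, Set.mem_image]
  constructor
  · rintro ⟨A, hA, hAm, rfl⟩
    obtain ⟨J, hJ, hcard, hA⟩ := exists_subset_map_countBelow_eq (ℓ - m) m A hA hAm
    rw [Nat.sub_add_cancel hm] at hJ hA
    exact ⟨lamAdd ℓ J, ⟨J, hJ, hcard, rfl⟩, by rw [barQuot1_lamAdd hJ, hA, hcard]⟩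
  · rintro ⟨_, ⟨J, hJ, rfl, rfl⟩, rfl⟩
    refine ⟨_, ?_, fun x hx => ?_, (barQuot1_lamAdd hJ).symm⟩
    · rw [Multiset.card_map, ← card_def, card_sdiff_of_subset hJ, card_range]
    · obtain ⟨i, -, rfl⟩ := Multiset.mem_map.mp hx
      exact card_filter_le _ _

/-- Lemma 6.5: for `ℓ ≥ 1` and `0 ≤ m ≤ ℓ`,
`W(ℓ-m,m) = {μ^b[1] : μ ∈ F_1^m(Λ_ℓ)}`. -/
theorem stmt7 (ℓ m : ℕ) (hℓ : 1 ≤ ℓ) (hm : m ≤ ℓ) :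
    W (ℓ - m) m = barQuot1 '' (F1Lam ℓ m) :=
  stmt7_general ℓ m hm
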